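/- Fix real numbers p > 0 and j0 ≥ 0, and let C ∈ ℝ satisfy C² = j0²·p². For n ∈ ℕ set G(n) = sgn(C)·j0·(n+1), F(n) = (j0² + (n+1)² − 1)/2, ε_n = √(p²/(j0² + (n+1)² − 1)), α_j(n) = √((2F(n) + 1 − j² − G(n)²/j²)/((2j+1)(2j−1))), and β_j(n) = G(n)/(j(j+1)). Then for every real j with j > 1/2 and j ≥ j0, and every real m with −j ≤ m ≤ j, the following three limits hold as n → ∞: (i) −ε_n·α_j(n)·√((j+m)(j+m−1)) → −α̃_j·√((j+m)(j+m−1)); (ii) ε_n·β_j(n)·√((j+m)(j−m+1)) → (C/(j(j+1)))·√((j+m)(j−m+1)); (iii) ε_n·α_{j+1}(n)·√((j−m+1)(j−m+2)) → α̃_{j+1}·√((j−m+1)(j−m+2)); where α̃_j = √((p² − C²/j²)/((2j+1)(2j−1))). (These are the limits of the matrix elements of ρ_{F(n),G(n)}(ε_n N₋) in Theorem 1, converging to the matrix elements of η_{p²,C}(P₋).) -/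

import Mathlib

/-!
Write `D = 2F(n) = j0² + (n+1)² − 1`, so that `ε_n² = p²/D`. Since `j0 ≥ 0` and `C² = j0²p²`,
`sgn(C)·j0·|p| = C`, hence `p²G(n)² = C²(n+1)² = C²(D + 1 − j0²)`. Multiplying out, `ε_n²α_j(n)²`
and `ε_n²G(n)²` are affine functions of `D` divided by `D`, and `D → ∞`; the leading coefficients
are `(p² − C²/j²)/((2j+1)(2j−1))` and `p²`. Taking square roots gives the limits of `ε_n α_j(n)`
and of `ε_n G(n)`, and the three matrix elements are these times constants.
-/

/-- Contraction parameter ε_n = √(p²/(j0² + (n+1)² − 1)). -/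
noncomputable def epsSeq (p j0 : ℝ) (n : ℕ) : ℝ :=
  Real.sqrt (p ^ 2 / (j0 ^ 2 + ((n : ℝ) + 1) ^ 2 - 1))

/-- G(n) = sgn(C)·j0·(n+1). -/
noncomputable def Gseq (C j0 : ℝ) (n : ℕ) : ℝ :=
  Real.sign C * j0 * ((n : ℝ) + 1)

/-- F(n) = (j0² + (n+1)² − 1)/2. -/
noncomputable def Fseq (j0 : ℝ) (n : ℕ) : ℝ :=
  (j0 ^ 2 + ((n : ℝ) + 1) ^ 2 - 1) / 2

/-- α_j(n) = √((2F(n) + 1 − j² − G(n)²/j²)/((2j+1)(2j−1))). -/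
noncomputable def alphaSeq (p j0 C j : ℝ) (n : ℕ) : ℝ :=
  Real.sqrt
    ((2 * Fseq j0 n + 1 - j ^ 2 - (Gseq C j0 n) ^ 2 / j ^ 2) /
      ((2 * j + 1) * (2 * j - 1)))

/-- β_j(n) = G(n)/(j(j+1)). -/
noncomputable def betaSeq (C j0 j : ℝ) (n : ℕ) : ℝ :=
  Gseq C j0 n / (j * (j + 1))

/-- α̃_j = √((p² − C²/j²)/((2j+1)(2j−1))). -/
noncomputable def alphaTilde (p C j : ℝ) : ℝ :=
  Real.sqrt ((p ^ 2 - C ^ 2 / j ^ 2) / ((2 * j + 1) * (2 * j - 1)))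

open Filter Topology

theorem Real.sign_mul_abs (r : ℝ) : Real.sign r * |r| = r := by
  rcases lt_trichotomy r 0 with h | rfl | h
  · rw [Real.sign_of_neg h, abs_of_neg h]; ring
  · simp
  · rw [Real.sign_of_pos h, abs_of_pos h, one_mul]

theorem tendsto_mul_add_div_self {α : Type*} {l : Filter α} {D : α → ℝ}
    (hD : Tendsto D l atTop) (a b : ℝ) :
    Tendsto (fun x => (a * D x + b) / D x) l (𝓝 a) := by
  have hlim : Tendsto (fun x => a + b * (D x)⁻¹) l (𝓝 (a + b * 0)) :=
    tendsto_const_nhds.add (tendsto_const_nhds.mul hD.inv_tendsto_atTop)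
  rw [mul_zero, add_zero] at hlim
  refine hlim.congr' ?_
  filter_upwards [hD.eventually_ne_atTop 0] with x hx
  field_simp

theorem two_mul_Fseq (j0 : ℝ) (n : ℕ) : 2 * Fseq j0 n = j0 ^ 2 + ((n : ℝ) + 1) ^ 2 - 1 := by
  rw [Fseq]; ring

theorem tendsto_two_mul_Fseq (j0 : ℝ) : Tendsto (fun n => 2 * Fseq j0 n) atTop atTop := by
  simp_rw [two_mul_Fseq]
  refine tendsto_atTop_add_const_right _ _ (tendsto_atTop_add_const_left _ _ ?_)
  exact (tendsto_pow_atTop two_ne_zero).comp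
    (tendsto_atTop_add_const_right _ 1 tendsto_natCast_atTop_atTop)

theorem two_mul_Fseq_nonneg (j0 : ℝ) (n : ℕ) : 0 ≤ 2 * Fseq j0 n := by
  have h1 : 1 ≤ ((n : ℝ) + 1) ^ 2 := one_le_pow₀ (le_add_of_nonneg_left n.cast_nonneg)
  rw [two_mul_Fseq]
  nlinarith [sq_nonneg j0]

theorem epsSeq_eq_sqrt (p j0 : ℝ) (n : ℕ) : epsSeq p j0 n = √(p ^ 2 / (2 * Fseq j0 n)) := by
  rw [epsSeq, two_mul_Fseq]

theorem sign_mul_mul_abs {p j0 C : ℝ} (hj0 : 0 ≤ j0) (hC : C ^ 2 = j0 ^ 2 * p ^ 2) :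
    Real.sign C * j0 * |p| = C := by
  have habs : |C| = j0 * |p| := by
    rw [← abs_of_nonneg hj0, ← abs_mul, ← sq_eq_sq_iff_abs_eq_abs, hC, mul_pow]
  rw [mul_assoc, ← habs, Real.sign_mul_abs]

theorem sq_mul_Gseq_sq {p j0 C : ℝ} (hj0 : 0 ≤ j0) (hC : C ^ 2 = j0 ^ 2 * p ^ 2) (n : ℕ) :
    p ^ 2 * Gseq C j0 n ^ 2 = C ^ 2 * ((n : ℝ) + 1) ^ 2 := by
  calc p ^ 2 * Gseq C j0 n ^ 2 = (Real.sign C * j0 * |p|) ^ 2 * ((n : ℝ) + 1) ^ 2 := by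
        rw [Gseq, ← sq_abs p]; ring
    _ = C ^ 2 * ((n : ℝ) + 1) ^ 2 := by rw [sign_mul_mul_abs hj0 hC]

theorem sq_mul_alphaSeq_numerator {p j0 C : ℝ} (hj0 : 0 ≤ j0) (hC : C ^ 2 = j0 ^ 2 * p ^ 2)
    (j : ℝ) (n : ℕ) :
    p ^ 2 * (2 * Fseq j0 n + 1 - j ^ 2 - Gseq C j0 n ^ 2 / j ^ 2) =
      (p ^ 2 - C ^ 2 / j ^ 2) * (2 * Fseq j0 n)
        + (p ^ 2 * (1 - j ^ 2) - C ^ 2 / j ^ 2 * (1 - j0 ^ 2)) := by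
  have hG := sq_mul_Gseq_sq hj0 hC n
  have hF := two_mul_Fseq j0 n
  rw [mul_sub, mul_div_assoc', hG, hF]
  ring

theorem tendsto_epsSeq_mul_alphaSeq {p j0 C : ℝ} (hj0 : 0 ≤ j0) (hC : C ^ 2 = j0 ^ 2 * p ^ 2)
    (j : ℝ) :
    Tendsto (fun n => epsSeq p j0 n * alphaSeq p j0 C j n) atTop (𝓝 (alphaTilde p C j)) := by
  have hlim := ((tendsto_mul_add_div_self (tendsto_two_mul_Fseq j0) (p ^ 2 - C ^ 2 / j ^ 2)
    (p ^ 2 * (1 - j ^ 2) - C ^ 2 / j ^ 2 * (1 - j0 ^ 2))).div_const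
      ((2 * j + 1) * (2 * j - 1))).sqrt
  refine hlim.congr fun n => ?_
  have hpF : 0 ≤ p ^ 2 / (2 * Fseq j0 n) := div_nonneg (sq_nonneg p) (two_mul_Fseq_nonneg j0 n)
  rw [epsSeq_eq_sqrt, alphaSeq, ← Real.sqrt_mul hpF, ← sq_mul_alphaSeq_numerator hj0 hC]
  ring_nf

theorem tendsto_epsSeq_mul_Gseq {p j0 C : ℝ} (hj0 : 0 ≤ j0) (hC : C ^ 2 = j0 ^ 2 * p ^ 2) :
    Tendsto (fun n => epsSeq p j0 n * Gseq C j0 n) atTop (𝓝 C) := by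
  have hlim := (tendsto_mul_add_div_self (tendsto_two_mul_Fseq j0) (p ^ 2)
    (p ^ 2 * (1 - j0 ^ 2))).sqrt.const_mul (Real.sign C * j0)
  rw [Real.sqrt_sq_eq_abs, sign_mul_mul_abs hj0 hC] at hlim
  refine hlim.congr fun n => ?_
  have hpF : 0 ≤ p ^ 2 / (2 * Fseq j0 n) := div_nonneg (sq_nonneg p) (two_mul_Fseq_nonneg j0 n)
  have hsqrt : √((p ^ 2 * (2 * Fseq j0 n) + p ^ 2 * (1 - j0 ^ 2)) / (2 * Fseq j0 n)) =
      epsSeq p j0 n * ((n : ℝ) + 1) := by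
    rw [epsSeq_eq_sqrt, ← Real.sqrt_sq (by positivity : (0 : ℝ) ≤ n + 1), ← Real.sqrt_mul hpF]
    congr 1
    rw [two_mul_Fseq]
    ring
  rw [hsqrt, Gseq]
  ring

theorem contraction_Nminus_matrix_elements_general (p j0 C : ℝ) (hj0 : 0 ≤ j0)
    (hC : C ^ 2 = j0 ^ 2 * p ^ 2) (j : ℝ)
    (m : ℝ) :
    Filter.Tendsto
        (fun n : ℕ => -(epsSeq p j0 n * alphaSeq p j0 C j n *
          Real.sqrt ((j + m) * (j + m - 1))))
        Filter.atTop (nhds (-(alphaTilde p C j * Real.sqrt ((j + m) * (j + m - 1))))) ∧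
    Filter.Tendsto
        (fun n : ℕ => epsSeq p j0 n * betaSeq C j0 j n *
          Real.sqrt ((j + m) * (j - m + 1)))
        Filter.atTop (nhds (C / (j * (j + 1)) * Real.sqrt ((j + m) * (j - m + 1)))) ∧
    Filter.Tendsto
        (fun n : ℕ => epsSeq p j0 n * alphaSeq p j0 C (j + 1) n *
          Real.sqrt ((j - m + 1) * (j - m + 2)))
        Filter.atTop
        (nhds (alphaTilde p C (j + 1) * Real.sqrt ((j - m + 1) * (j - m + 2)))) := by
  have hα := tendsto_epsSeq_mul_alphaSeq hj0 hC
  have hβ : Tendsto (fun n => epsSeq p j0 n * betaSeq C j0 j n) atTop (𝓝 (C / (j * (j + 1)))) :=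
    ((tendsto_epsSeq_mul_Gseq hj0 hC).div_const _).congr fun n => by rw [betaSeq, mul_div_assoc]
  exact ⟨((hα j).mul_const _).neg, hβ.mul_const _, (hα (j + 1)).mul_const _⟩

theorem contraction_Nminus_matrix_elements (p j0 C : ℝ) (hp : 0 < p) (hj0 : 0 ≤ j0)
    (hC : C ^ 2 = j0 ^ 2 * p ^ 2) (j : ℝ) (hj : 1 / 2 < j) (hjj0 : j0 ≤ j)
    (m : ℝ) (hm1 : -j ≤ m) (hm2 : m ≤ j) :
    Filter.Tendsto
        (fun n : ℕ => -(epsSeq p j0 n * alphaSeq p j0 C j n *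
          Real.sqrt ((j + m) * (j + m - 1))))
        Filter.atTop (nhds (-(alphaTilde p C j * Real.sqrt ((j + m) * (j + m - 1))))) ∧
    Filter.Tendsto
        (fun n : ℕ => epsSeq p j0 n * betaSeq C j0 j n *
          Real.sqrt ((j + m) * (j - m + 1)))
        Filter.atTop (nhds (C / (j * (j + 1)) * Real.sqrt ((j + m) * (j - m + 1)))) ∧
    Filter.Tendsto
        (fun n : ℕ => epsSeq p j0 n * alphaSeq p j0 C (j + 1) n *
          Real.sqrt ((j - m + 1) * (j - m + 2)))
        Filter.atTop
        (nhds (alphaTilde p C (j + 1) * Real.sqrt ((j - m + 1) * (j - m + 2)))) :=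
  contraction_Nminus_matrix_elements_general p j0 C hj0 hC j m
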